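/- A cluster transformation DT : 𝒳 ⇢ 𝒳 of a seed 𝒳-torus with coordinates (X_i) tropicalizes to the map sending each positive basic lamination l_i⁺ to the negative basic lamination l_i⁻ if and only if for all i, j, the degree of X_i in DT*(X_j) equals −δ_{ij}, where deg_{X_i} of a ratio f/g of positive-coefficient polynomials is deg_{X_i} f − deg_{X_i} g. -/

import Mathlib

open BigOperators

/-- The tropicalization of a polynomial with positive coefficients. -/
def tropPoly {n : ℕ} (f : MvPolynomial (Fin n) ℤ) (x : Fin n → ℤ) : ℤ :=
  WithBot.unbotD 0 (f.support.sup fun d => ((∑ i, (d i : ℤ) * x i : ℤ) : WithBot ℤ))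

/-- A polynomial is positive if it is nonzero and all its coefficients are nonnegative. -/
def IsPosPoly {n : ℕ} (f : MvPolynomial (Fin n) ℤ) : Prop :=
  f ≠ 0 ∧ ∀ d, 0 ≤ f.coeff d

/-- The degree of `f` in the variable `X_i`. -/
def degX {n : ℕ} (i : Fin n) (f : MvPolynomial (Fin n) ℤ) : ℤ :=
  ((f.support.sup fun d => d i : ℕ) : ℤ)

/-! The tropicalization of the monomial `X^d` at the basic lamination `e_i` is `d i`, so the
tropicalization of a nonzero polynomial at `e_i`, being the maximum over its monomials, is its
`X_i`-degree. -/

lemma tropPoly_indicator_eq_degX {n : ℕ} (i : Fin n) {f : MvPolynomial (Fin n) ℤ} (hf : f ≠ 0) :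
    tropPoly f (fun a => if a = i then 1 else 0) = degX i f := by
  have hs : f.support.Nonempty := MvPolynomial.support_nonempty.mpr hf
  have hpair : ∀ d : Fin n →₀ ℕ, ∑ a, (d a : ℤ) * (if a = i then 1 else 0) = d i := by
    simp [mul_ite]
  have hcoe : (f.support.sup fun d => ((d i : ℤ) : WithBot ℤ)) =
      f.support.sup' hs (fun d => (d i : ℤ)) :=
    (Finset.coe_sup' hs (fun d => (d i : ℤ))).symm
  unfold tropPoly degX
  simp only [hpair]
  rw [hcoe, WithBot.unbotD_coe, ← Nat.cast_finsetSup', Finset.sup'_eq_sup]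

theorem stmt_14 {n : ℕ}
    -- the pullbacks DT*(X_j) = f j / g j, each a positive rational function
    (f g : Fin n → MvPolynomial (Fin n) ℤ)
    (hf : ∀ j, IsPosPoly (f j)) (hg : ∀ j, IsPosPoly (g j)) :
    -- DT^t sends every positive basic lamination l_i⁺ = e_i to l_i⁻ = -e_i ...
    (∀ i j : Fin n,
        tropPoly (f j) (fun a => if a = i then 1 else 0) -
          tropPoly (g j) (fun a => if a = i then 1 else 0) =
        -(if i = j then 1 else 0)) ↔
      -- ... iff deg_{X_i} DT*(X_j) = -δ_{ij}
      (∀ i j : Fin n, degX i (f j) - degX i (g j) = -(if i = j then 1 else 0)) := by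
  simp only [tropPoly_indicator_eq_degX _ (hf _).1, tropPoly_indicator_eq_degX _ (hg _).1]
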